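/- The planar flow g(z) = z + u·h(wᵀz + b) is injective on ℝ^d whenever h is differentiable with h′(t)·(uᵀw) > −1 for all t ∈ ℝ. -/
import Mathlib


open RealInnerProductSpace

/-- Planar flow invertibility: `g(z) = z + h(⟪w,z⟫ + b) • u` is injective
whenever `h'(t) · ⟪u,w⟫ > −1` for all `t`. -/
theorem planar_flow_injective (d : ℕ)
    (u w : EuclideanSpace ℝ (Fin d)) (b : ℝ)
    (h h' : ℝ → ℝ) (hh : ∀ t, HasDerivAt h (h' t) t)
    (hcond : ∀ t, -1 < h' t * ⟪u, w⟫) :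
    Function.Injective (fun z : EuclideanSpace ℝ (Fin d) =>
      z + h (⟪w, z⟫ + b) • u) := by
  intro z1 z2 heq
  simp only at heq
  set t1 := ⟪w, z1⟫ + b with ht1
  set t2 := ⟪w, z2⟫ + b with ht2
  have hw : ⟪w, z1⟫ + h t1 * ⟪w, u⟫ = ⟪w, z2⟫ + h t2 * ⟪w, u⟫ := by
    have := congrArg (fun v => ⟪w, v⟫) heq
    simpa [inner_add_right, inner_smul_right] using this
  have φderiv : ∀ t : ℝ, HasDerivAt (fun t : ℝ => t + h t * ⟪u, w⟫)
      (1 + h' t * ⟪u, w⟫) t := fun t =>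
    (hasDerivAt_id t).add ((hh t).mul_const _)
  have φmono : StrictMono (fun t : ℝ => t + h t * ⟪u, w⟫) := by
    exact strictMono_of_hasDerivAt_pos φderiv (fun t => by linarith [hcond t])
  have ht : t1 = t2 := by
    apply φmono.injective
    have huw : (⟪u, w⟫ : ℝ) = ⟪w, u⟫ := real_inner_comm w u
    simp only [huw, ht1, ht2]
    linarith
  have hh12 : h t1 = h t2 := by rw [ht]
  have : z1 = z2 := by
    rw [hh12] at heq
    exact add_right_cancel heq
  exact this
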